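/- arXiv:2309.15763 — 2 statements merged into one kernel-verified Lean document; each statement's English description precedes it below -/
import Mathlib

section
/- (Soundness of JD_CS for D-arbitrary subset models) Let CS be an arbitrary constant specification for JD. For every formula F, if JD_CS ⊢ F then F is D-arbitrary CS-valid. -/
/-- Justification terms: constants, variables, application, sum, bang. -/
inductive Tm : Type
  | const : Nat → Tm
  | var   : Nat → Tm
  | app   : Tm → Tm → Tm
  | sum   : Tm → Tm → Tm
  | bang  : Tm → Tm

/-- Formulas of justification logic. -/
inductive Fm : Type
  | prop : Nat → Fm
  | bot  : Fm
  | imp  : Fm → Fm → Fm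
  | just : Tm → Fm → Fm

/-- ¬A := A → ⊥ -/
def Fm.neg (A : Fm) : Fm := Fm.imp A Fm.bot
/-- ⊤ := ¬⊥ -/
def Fm.top : Fm := Fm.neg Fm.bot
/-- A ∨ B := ¬A → B -/
def Fm.disj (A B : Fm) : Fm := Fm.imp (Fm.neg A) B
/-- A ∧ B := ¬(A → ¬B) -/
def Fm.conj (A B : Fm) : Fm := Fm.neg (Fm.imp A (Fm.neg B))

/-- A classical propositional tautology in this language: true under every
Boolean valuation that respects ⊥ and →, treating `t:F` and atoms as arbitrary atoms. -/
def IsTaut (A : Fm) : Prop :=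
  ∀ v : Fm → Bool,
    v Fm.bot = false →
    (∀ F G : Fm, v (Fm.imp F G) = (!(v F) || v G)) →
    v A = true

/-- !^n t -/
def bangIter : Nat → Tm → Tm
  | 0, t => t
  | n + 1, t => Tm.bang (bangIter n t)

/-- `anFm n c A` is the formula !^n c : !^{n-1} c : ... : !c : c : A. -/
def anFm : Nat → Tm → Fm → Fm
  | 0, c, A => Fm.just c A
  | n + 1, c, A => Fm.just (bangIter (n + 1) c) (anFm n c A)

/-- Axioms of JD: classical tautologies, j+, j, jd. -/
inductive JDAxiom : Fm → Prop
  | cl {A : Fm} : IsTaut A → JDAxiom A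
  | jplus (s t : Tm) (A : Fm) :
      JDAxiom (Fm.imp (Fm.disj (Fm.just s A) (Fm.just t A)) (Fm.just (Tm.sum s t) A))
  | j (s t : Tm) (A B : Fm) :
      JDAxiom (Fm.imp (Fm.just s (Fm.imp A B)) (Fm.imp (Fm.just t A) (Fm.just (Tm.app s t) B)))
  | jd (t : Tm) : JDAxiom (Fm.neg (Fm.just t Fm.bot))

/-- Axioms of JNoC: classical tautologies, j+, j, noc. -/
inductive JNoCAxiom : Fm → Prop
  | cl {A : Fm} : IsTaut A → JNoCAxiom A
  | jplus (s t : Tm) (A : Fm) :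
      JNoCAxiom (Fm.imp (Fm.disj (Fm.just s A) (Fm.just t A)) (Fm.just (Tm.sum s t) A))
  | j (s t : Tm) (A B : Fm) :
      JNoCAxiom (Fm.imp (Fm.just s (Fm.imp A B)) (Fm.imp (Fm.just t A) (Fm.just (Tm.app s t) B)))
  | noc (t : Tm) (A : Fm) :
      JNoCAxiom (Fm.neg (Fm.conj (Fm.just t A) (Fm.just t (Fm.neg A))))

/-- A constant specification for the logic with axioms `Ax`: a set of pairs (c, A)
where c is (the index of) a constant and A is an axiom. -/
def IsConstSpec (Ax : Fm → Prop) (CS : Set (Nat × Fm)) : Prop :=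
  ∀ p ∈ CS, Ax p.2

/-- CS is axiomatically appropriate: every axiom is justified by some constant. -/
def AxAppropriate (Ax : Fm → Prop) (CS : Set (Nat × Fm)) : Prop :=
  ∀ A : Fm, Ax A → ∃ c : Nat, (c, A) ∈ CS

/-- Hilbert-style derivability from axioms `Ax`, modus ponens, and axiom necessitation. -/
inductive Deriv (Ax : Fm → Prop) (CS : Set (Nat × Fm)) : Fm → Prop
  | ax {A : Fm} : Ax A → Deriv Ax CS A
  | mp {A B : Fm} : Deriv Ax CS (Fm.imp A B) → Deriv Ax CS A → Deriv Ax CS B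
  | an {c : Nat} {A : Fm} (n : Nat) : (c, A) ∈ CS → Deriv Ax CS (anFm n (Tm.const c) A)

/-- A subset-model frame: worlds, normal worlds, valuation, evidence function. -/
structure SModel where
  W : Type
  W0 : Set W
  V : W → Fm → Prop
  E : W → Tm → Set W

/-- Truth set [A]. -/
def SModel.ts (M : SModel) (A : Fm) : Set M.W := {w : M.W | M.V w A}

/-- APP_ω(s,t). -/
def SModel.APP (M : SModel) (ω : M.W) (s t : Tm) : Set Fm :=
  {F : Fm | ∃ H : Fm, M.E ω s ⊆ M.ts (Fm.imp H F) ∧ M.E ω t ⊆ M.ts H}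

/-- The conditions common to general, D-arbitrary and NoC CS-subset models. -/
def CoreConds (CS : Set (Nat × Fm)) (M : SModel) : Prop :=
  M.W0.Nonempty ∧
  ∀ ω ∈ M.W0,
    (¬ M.V ω Fm.bot) ∧
    (∀ F G : Fm, M.V ω (Fm.imp F G) ↔ (¬ M.V ω F ∨ M.V ω G)) ∧
    (∀ (t : Tm) (F : Fm), M.V ω (Fm.just t F) ↔ M.E ω t ⊆ M.ts F) ∧
    (∀ s t : Tm, M.E ω (Tm.sum s t) ⊆ M.E ω s ∩ M.E ω t) ∧
    (∀ s t : Tm, M.E ω (Tm.app s t) ⊆ {υ : M.W | ∀ F ∈ M.APP ω s t, υ ∈ M.ts F}) ∧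
    (∀ (c : Nat) (A : Fm), (c, A) ∈ CS →
      M.E ω (Tm.const c) ⊆ M.ts A ∧
      ∀ n : Nat, M.E ω (bangIter (n + 1) (Tm.const c)) ⊆ M.ts (anFm n (Tm.const c) A))

/-- General CS-subset model: every E(ω,t) meets the normal worlds. -/
def IsGeneralModel (CS : Set (Nat × Fm)) (M : SModel) : Prop :=
  CoreConds CS M ∧ ∀ ω ∈ M.W0, ∀ t : Tm, ∃ υ ∈ M.W0, υ ∈ M.E ω t

/-- D-arbitrary CS-subset model: every E(ω,t) meets W_{¬⊥}. -/
def IsDArbModel (CS : Set (Nat × Fm)) (M : SModel) : Prop :=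
  CoreConds CS M ∧ ∀ ω ∈ M.W0, ∀ t : Tm, ∃ υ : M.W, ¬ M.V υ Fm.bot ∧ υ ∈ M.E ω t

/-- NoC CS-subset model: every E(ω,t) meets W_nc. -/
def IsNoCModel (CS : Set (Nat × Fm)) (M : SModel) : Prop :=
  CoreConds CS M ∧ ∀ ω ∈ M.W0, ∀ t : Tm,
    ∃ υ : M.W, (∀ A : Fm, ¬ M.V υ A ∨ ¬ M.V υ (Fm.neg A)) ∧ υ ∈ M.E ω t

def GeneralValid (CS : Set (Nat × Fm)) (F : Fm) : Prop :=
  ∀ M : SModel, IsGeneralModel CS M → ∀ ω ∈ M.W0, M.V ω F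

def DArbValid (CS : Set (Nat × Fm)) (F : Fm) : Prop :=
  ∀ M : SModel, IsDArbModel CS M → ∀ ω ∈ M.W0, M.V ω F

def NoCValid (CS : Set (Nat × Fm)) (F : Fm) : Prop :=
  ∀ M : SModel, IsNoCModel CS M → ∀ ω ∈ M.W0, M.V ω F

/-- Γ is consistent: no finite list of members of Γ lets the logic derive ⊥
(i.e. A₁ → ... → Aₙ → ⊥ is not derivable for A₁,...,Aₙ ∈ Γ). -/
def ConsistentSet (Ax : Fm → Prop) (CS : Set (Nat × Fm)) (Γ : Set Fm) : Prop :=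
  ¬ ∃ L : List Fm, (∀ A ∈ L, A ∈ Γ) ∧ Deriv Ax CS (L.foldr Fm.imp Fm.bot)

/-- Maximal consistent: consistent and every proper superset is inconsistent. -/
def MaxConsistent (Ax : Fm → Prop) (CS : Set (Nat × Fm)) (Γ : Set Fm) : Prop :=
  ConsistentSet Ax CS Γ ∧ ∀ Δ : Set Fm, Γ ⊂ Δ → ¬ ConsistentSet Ax CS Δ

/-- The canonical model: worlds are arbitrary sets of formulas, normal worlds are
the maximal consistent sets, V^C(Γ,F)=1 iff F ∈ Γ, E^C(Γ,t) = {Δ : Δ ⊇ Γ/t}. -/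
def canonicalModel (Ax : Fm → Prop) (CS : Set (Nat × Fm)) : SModel where
  W := Set Fm
  W0 := {Γ : Set Fm | MaxConsistent Ax CS Γ}
  V := fun Γ F => F ∈ Γ
  E := fun Γ t => {Δ : Set Fm | {F : Fm | Fm.just t F ∈ Γ} ⊆ Δ}

/-!
Soundness is proved by induction on derivations, checking each axiom and rule at a normal world
`ω ∈ W₀`. There the valuation is Boolean, so tautologies hold; `j+` and `j` follow from the
closure conditions on `E(ω, s + t)` and `E(ω, s · t)`; and `jd` holds because `E(ω, t)` contains
a world where `⊥` is false, so it is never contained in `[⊥]`. Axiom necessitation is exactly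
the constant-specification condition on `E`.
-/

namespace CoreConds

variable {CS : Set (Nat × Fm)} {M : SModel} {ω : M.W}

theorem not_V_bot (hM : CoreConds CS M) (hω : ω ∈ M.W0) : ¬ M.V ω Fm.bot :=
  (hM.2 ω hω).1

theorem V_imp_iff (hM : CoreConds CS M) (hω : ω ∈ M.W0) {F G : Fm} :
    M.V ω (Fm.imp F G) ↔ (M.V ω F → M.V ω G) := by
  rw [(hM.2 ω hω).2.1 F G, imp_iff_not_or]

theorem V_just_iff (hM : CoreConds CS M) (hω : ω ∈ M.W0) {t : Tm} {F : Fm} :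
    M.V ω (Fm.just t F) ↔ M.E ω t ⊆ M.ts F :=
  (hM.2 ω hω).2.2.1 t F

theorem V_of_isTaut (hM : CoreConds CS M) (hω : ω ∈ M.W0) {A : Fm} (hA : IsTaut A) :
    M.V ω A := by
  classical
  have hv := hA (fun F => decide (M.V ω F)) (by simpa using hM.not_V_bot hω) fun F G => by
    by_cases hF : M.V ω F <;> by_cases hG : M.V ω G <;> simp [hF, hG, hM.V_imp_iff hω]
  simpa using hv

theorem V_jplus (hM : CoreConds CS M) (hω : ω ∈ M.W0) (s t : Tm) (A : Fm) :
    M.V ω (Fm.imp (Fm.disj (Fm.just s A) (Fm.just t A)) (Fm.just (Tm.sum s t) A)) := by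
  have hsum := (hM.2 ω hω).2.2.2.1 s t
  simp only [Fm.disj, Fm.neg, hM.V_imp_iff hω, hM.V_just_iff hω]
  intro hst
  by_cases hs : M.E ω s ⊆ M.ts A
  · exact hsum.trans (Set.inter_subset_left.trans hs)
  · exact hsum.trans (Set.inter_subset_right.trans (hst fun h => absurd h hs))

theorem V_j (hM : CoreConds CS M) (hω : ω ∈ M.W0) (s t : Tm) (A B : Fm) :
    M.V ω (Fm.imp (Fm.just s (Fm.imp A B)) (Fm.imp (Fm.just t A) (Fm.just (Tm.app s t) B))) := by
  simp only [hM.V_imp_iff hω, hM.V_just_iff hω]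
  exact fun hs ht _ hυ => (hM.2 ω hω).2.2.2.2.1 s t hυ B ⟨A, hs, ht⟩

theorem V_anFm (hM : CoreConds CS M) (hω : ω ∈ M.W0) {c : Nat} {A : Fm} (hc : (c, A) ∈ CS) :
    ∀ n, M.V ω (anFm n (Tm.const c) A)
  | 0 => (hM.V_just_iff hω).mpr ((hM.2 ω hω).2.2.2.2.2 c A hc).1
  | n + 1 => (hM.V_just_iff hω).mpr (((hM.2 ω hω).2.2.2.2.2 c A hc).2 n)

end CoreConds

namespace IsDArbModel

variable {CS : Set (Nat × Fm)} {M : SModel} {ω : M.W}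

theorem V_jd (hM : IsDArbModel CS M) (hω : ω ∈ M.W0) (t : Tm) :
    M.V ω (Fm.neg (Fm.just t Fm.bot)) := by
  rw [Fm.neg, hM.1.V_imp_iff hω, hM.1.V_just_iff hω]
  intro hsub
  obtain ⟨υ, hυ, hυt⟩ := hM.2 ω hω t
  exact absurd (hsub hυt) hυ

theorem V_of_JDAxiom (hM : IsDArbModel CS M) (hω : ω ∈ M.W0) {A : Fm} (hA : JDAxiom A) :
    M.V ω A := by
  cases hA with
  | cl hA => exact hM.1.V_of_isTaut hω hA
  | jplus s t A => exact hM.1.V_jplus hω s t A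
  | j s t A B => exact hM.1.V_j hω s t A B
  | jd t => exact hM.V_jd hω t

end IsDArbModel

theorem stmt_3_general (CS : Set (Nat × Fm))
    (F : Fm) (h : Deriv JDAxiom CS F) :
    DArbValid CS F := by
  intro M hM ω hω
  induction h with
  | ax hA => exact hM.V_of_JDAxiom hω hA
  | mp _ _ ihAB ihA => exact (hM.1.V_imp_iff hω).mp ihAB ihA
  | an n hc => exact hM.1.V_anFm hω hc n

/-- Soundness of JD_CS with respect to D-arbitrary CS-subset models, for arbitrary CS. -/
theorem stmt_3 (CS : Set (Nat × Fm)) (hCS : IsConstSpec JDAxiom CS)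
    (F : Fm) (h : Deriv JDAxiom CS F) :
    DArbValid CS F :=
  stmt_3_general CS F h
end

section
/- (Completeness of JD_CS for D-arbitrary subset models) Let CS be an arbitrary constant specification for JD. For every formula F, if F is D-arbitrary CS-valid then JD_CS ⊢ F. -/
/-!
Take as worlds all sets of formulas, as normal worlds the maximal
JD_CS-consistent sets, let `V(Γ, F)` be `F ∈ Γ` and `E(Γ, t)` the supersets of
`Γ/t = {F | t:F ∈ Γ}`. The truth lemma holds by definition of `E`, and the closure conditions on
`E` are the axioms j+, j and necessitation read inside a maximal consistent set. The world `Γ/t`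
itself lies in `E(Γ, t)`; it need not be consistent, but it omits `⊥` because `¬ t:⊥ ∈ Γ` by jd,
which is exactly the D-arbitrary condition. A formula that JD_CS does not derive has its negation
in some maximal consistent set (Lindenbaum), where the formula then fails.
-/

class HasTautologies (Ax : Fm → Prop) : Prop where
  ax_of_isTaut : ∀ {A : Fm}, IsTaut A → Ax A

instance : HasTautologies JDAxiom := ⟨JDAxiom.cl⟩

lemma foldr_imp_eq_true_iff (v : Fm → Bool) (hv : ∀ F G, v (Fm.imp F G) = (!(v F) || v G))
    (L : List Fm) (C : Fm) :
    v (L.foldr Fm.imp C) = true ↔ ((∀ A ∈ L, v A = true) → v C = true) := by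
  induction L with
  | nil => simp
  | cons A L ih =>
    rw [List.foldr_cons, hv, Bool.or_eq_true, ih, List.forall_mem_cons]
    cases v A <;> simp

lemma isTaut_imp_self (A : Fm) : IsTaut (Fm.imp A A) := by
  intro v _ hv; simp [hv]

lemma isTaut_imp_intro (F G : Fm) : IsTaut (Fm.imp G (Fm.imp F G)) := by
  intro v _ hv; simp only [hv]; cases v G <;> cases v F <;> rfl

lemma isTaut_neg_imp (F G : Fm) : IsTaut (Fm.imp F.neg (Fm.imp F G)) := by
  intro v hb hv; simp only [Fm.neg, hv, hb]; cases v F <;> cases v G <;> rfl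

lemma isTaut_neg_neg_imp (F : Fm) : IsTaut (Fm.imp F.neg.neg F) := by
  intro v hb hv; simp only [Fm.neg, hv, hb]; cases v F <;> rfl

lemma isTaut_imp_disj_left (X Y : Fm) : IsTaut (Fm.imp X (Fm.disj X Y)) := by
  intro v hb hv; simp only [Fm.disj, Fm.neg, hv, hb]; cases v X <;> cases v Y <;> rfl

lemma isTaut_imp_disj_right (X Y : Fm) : IsTaut (Fm.imp Y (Fm.disj X Y)) := by
  intro v hb hv; simp only [Fm.disj, Fm.neg, hv, hb]; cases v X <;> cases v Y <;> rfl

lemma isTaut_foldr_mp (L₁ L₂ : List Fm) (A B : Fm) :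
    IsTaut (Fm.imp (L₁.foldr Fm.imp (Fm.imp A B))
      (Fm.imp (L₂.foldr Fm.imp A) ((L₁ ++ L₂).foldr Fm.imp B))) := by
  intro v _ hv
  simp only [hv, Bool.or_eq_true, Bool.not_eq_true', ← Bool.not_eq_true,
    foldr_imp_eq_true_iff v hv, List.mem_append]
  grind

lemma isTaut_foldr_deduction (L L' : List Fm) (A B : Fm) (h : ∀ C ∈ L, C = A ∨ C ∈ L') :
    IsTaut (Fm.imp (L.foldr Fm.imp B) (L'.foldr Fm.imp (Fm.imp A B))) := by
  intro v _ hv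
  simp only [hv, Bool.or_eq_true, Bool.not_eq_true', ← Bool.not_eq_true,
    foldr_imp_eq_true_iff v hv]
  grind

section

variable {Ax : Fm → Prop} {CS : Set (Nat × Fm)}

lemma Deriv.of_isTaut [HasTautologies Ax] {A : Fm} (h : IsTaut A) : Deriv Ax CS A :=
  Deriv.ax (HasTautologies.ax_of_isTaut h)

def DerivFrom (Ax : Fm → Prop) (CS : Set (Nat × Fm)) (Γ : Set Fm) (A : Fm) : Prop :=
  ∃ L : List Fm, (∀ B ∈ L, B ∈ Γ) ∧ Deriv Ax CS (L.foldr Fm.imp A)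

namespace DerivFrom

variable {Γ : Set Fm} {A B : Fm}

lemma of_deriv (h : Deriv Ax CS A) : DerivFrom Ax CS Γ A :=
  ⟨[], by simp, h⟩

variable [HasTautologies Ax]

lemma of_mem (h : A ∈ Γ) : DerivFrom Ax CS Γ A :=
  ⟨[A], by simpa using h, Deriv.of_isTaut (isTaut_imp_self A)⟩

lemma mp (hAB : DerivFrom Ax CS Γ (Fm.imp A B)) (hA : DerivFrom Ax CS Γ A) :
    DerivFrom Ax CS Γ B := by
  obtain ⟨L₁, hL₁, d₁⟩ := hAB
  obtain ⟨L₂, hL₂, d₂⟩ := hA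
  refine ⟨L₁ ++ L₂, fun C hC => ?_, ?_⟩
  · rcases List.mem_append.mp hC with hC | hC
    exacts [hL₁ C hC, hL₂ C hC]
  · exact (Deriv.of_isTaut (isTaut_foldr_mp L₁ L₂ A B)).mp d₁ |>.mp d₂

lemma deduction (h : DerivFrom Ax CS (insert A Γ) B) : DerivFrom Ax CS Γ (Fm.imp A B) := by
  classical
  obtain ⟨L, hL, d⟩ := h
  refine ⟨L.filter (· ≠ A), fun C hC => ?_, ?_⟩
  · obtain ⟨hCL, hCA⟩ := List.mem_filter.mp hC
    exact (hL C hCL).resolve_left (by simpa using hCA)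
  · refine (Deriv.of_isTaut (isTaut_foldr_deduction L _ A B fun C hC => ?_)).mp d
    by_cases hCA : C = A
    · exact Or.inl hCA
    · exact Or.inr (List.mem_filter.mpr ⟨hC, by simpa using hCA⟩)

end DerivFrom

lemma consistentSet_singleton_neg [HasTautologies Ax] {F : Fm} (hF : ¬ Deriv Ax CS F) :
    ConsistentSet Ax CS {F.neg} := by
  intro hinc
  obtain ⟨L, hL, d⟩ := DerivFrom.deduction (Γ := ∅) (Set.singleton_def F.neg ▸ hinc)
  obtain rfl : L = [] := List.eq_nil_iff_forall_not_mem.2 hL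
  exact hF ((Deriv.of_isTaut (isTaut_neg_neg_imp F)).mp d)

lemma exists_maxConsistent_superset {Γ : Set Fm} (h : ConsistentSet Ax CS Γ) :
    ∃ Δ : Set Fm, Γ ⊆ Δ ∧ MaxConsistent Ax CS Δ := by
  have hchain : ∀ c ⊆ {Δ : Set Fm | ConsistentSet Ax CS Δ}, IsChain (· ⊆ ·) c → c.Nonempty →
      ∃ ub ∈ {Δ : Set Fm | ConsistentSet Ax CS Δ}, ∀ s ∈ c, s ⊆ ub := by
    intro c hcons hc hne
    refine ⟨⋃₀ c, ?_, fun s hs => Set.subset_sUnion_of_mem hs⟩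
    rintro ⟨L, hL, d⟩
    -- a derivation uses finitely many premises, which all lie in one member of the chain
    obtain ⟨s, hs, hLs⟩ :=
      hc.directedOn.exists_mem_subset_of_finite_of_subset_sUnion hne L.finite_toSet hL
    exact hcons hs ⟨L, hLs, d⟩
  obtain ⟨Δ, hΓΔ, hmax⟩ := zorn_subset_nonempty _ hchain Γ h
  exact ⟨Δ, hΓΔ, hmax.prop, fun Δ' hΔ' hcons => hΔ'.2 (hmax.2 hcons hΔ'.1)⟩

namespace MaxConsistent

variable [HasTautologies Ax] {Γ : Set Fm} {A B : Fm}

lemma derivFrom_neg_of_notMem (hΓ : MaxConsistent Ax CS Γ) (hA : A ∉ Γ) :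
    DerivFrom Ax CS Γ A.neg :=
  DerivFrom.deduction (not_not.mp (hΓ.2 _ (Set.ssubset_insert hA)))

lemma mem_of_derivFrom (hΓ : MaxConsistent Ax CS Γ) (h : DerivFrom Ax CS Γ A) : A ∈ Γ := by
  by_contra hA
  exact hΓ.1 ((hΓ.derivFrom_neg_of_notMem hA).mp h)

lemma mem_of_deriv (hΓ : MaxConsistent Ax CS Γ) (h : Deriv Ax CS A) : A ∈ Γ :=
  hΓ.mem_of_derivFrom (.of_deriv h)

lemma mem_of_imp_mem (hΓ : MaxConsistent Ax CS Γ) (hAB : Fm.imp A B ∈ Γ) (hA : A ∈ Γ) :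
    B ∈ Γ :=
  hΓ.mem_of_derivFrom ((DerivFrom.of_mem hAB).mp (.of_mem hA))

lemma mem_of_isTaut_imp (hΓ : MaxConsistent Ax CS Γ) (hAB : IsTaut (Fm.imp A B)) (hA : A ∈ Γ) :
    B ∈ Γ :=
  hΓ.mem_of_imp_mem (hΓ.mem_of_deriv (.of_isTaut hAB)) hA

lemma bot_notMem (hΓ : MaxConsistent Ax CS Γ) : Fm.bot ∉ Γ :=
  fun h => hΓ.1 (DerivFrom.of_mem h)

lemma imp_mem_iff (hΓ : MaxConsistent Ax CS Γ) : Fm.imp A B ∈ Γ ↔ A ∉ Γ ∨ B ∈ Γ := by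
  refine ⟨fun h => or_iff_not_imp_left.2 fun hA => hΓ.mem_of_imp_mem h (not_not.1 hA), ?_⟩
  rintro (hA | hB)
  · exact hΓ.mem_of_isTaut_imp (isTaut_neg_imp A B) (hΓ.mem_of_derivFrom
      (hΓ.derivFrom_neg_of_notMem hA))
  · exact hΓ.mem_of_isTaut_imp (isTaut_imp_intro A B) hB

end MaxConsistent

lemma canonicalModel_E_subset_ts_iff (Γ : Set Fm) (t : Tm) (F : Fm) :
    (canonicalModel Ax CS).E Γ t ⊆ (canonicalModel Ax CS).ts F ↔ Fm.just t F ∈ Γ :=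
  ⟨fun h => h (Set.Subset.refl {F | Fm.just t F ∈ Γ}), fun h _ hΔ => hΔ h⟩

section JD

variable {Γ : Set Fm} {s t : Tm} {F H : Fm}

lemma MaxConsistent.just_sum_mem_of_left (hΓ : MaxConsistent JDAxiom CS Γ)
    (h : Fm.just s F ∈ Γ) : Fm.just (Tm.sum s t) F ∈ Γ :=
  hΓ.mem_of_imp_mem (hΓ.mem_of_deriv (.ax (.jplus s t F)))
    (hΓ.mem_of_isTaut_imp (isTaut_imp_disj_left _ _) h)

lemma MaxConsistent.just_sum_mem_of_right (hΓ : MaxConsistent JDAxiom CS Γ)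
    (h : Fm.just t F ∈ Γ) : Fm.just (Tm.sum s t) F ∈ Γ :=
  hΓ.mem_of_imp_mem (hΓ.mem_of_deriv (.ax (.jplus s t F)))
    (hΓ.mem_of_isTaut_imp (isTaut_imp_disj_right _ _) h)

lemma MaxConsistent.just_app_mem (hΓ : MaxConsistent JDAxiom CS Γ)
    (hs : Fm.just s (Fm.imp H F) ∈ Γ) (ht : Fm.just t H ∈ Γ) : Fm.just (Tm.app s t) F ∈ Γ :=
  hΓ.mem_of_imp_mem (hΓ.mem_of_imp_mem (hΓ.mem_of_deriv (.ax (.j s t H F))) hs) ht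

lemma canonicalModel_coreConds (hne : (canonicalModel JDAxiom CS).W0.Nonempty) :
    CoreConds CS (canonicalModel JDAxiom CS) := by
  refine ⟨hne, fun Γ (hΓ : MaxConsistent JDAxiom CS Γ) => ⟨hΓ.bot_notMem,
    fun _ _ => hΓ.imp_mem_iff, fun t F => (canonicalModel_E_subset_ts_iff Γ t F).symm,
    ?_, ?_, ?_⟩⟩
  · exact fun s t Δ hΔ =>
      ⟨fun F hF => hΔ (hΓ.just_sum_mem_of_left hF), fun F hF => hΔ (hΓ.just_sum_mem_of_right hF)⟩
  · rintro s t Δ hΔ F ⟨H, hs, ht⟩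
    exact hΔ (hΓ.just_app_mem ((canonicalModel_E_subset_ts_iff Γ s _).1 hs)
      ((canonicalModel_E_subset_ts_iff Γ t H).1 ht))
  · exact fun c A hcA => ⟨fun Δ hΔ => hΔ (hΓ.mem_of_deriv (.an 0 hcA)),
      fun n Δ hΔ => hΔ (hΓ.mem_of_deriv (.an (n + 1) hcA))⟩

lemma canonicalModel_isDArbModel (hne : (canonicalModel JDAxiom CS).W0.Nonempty) :
    IsDArbModel CS (canonicalModel JDAxiom CS) := by
  refine ⟨canonicalModel_coreConds hne, fun (Γ : Set Fm) (hΓ : MaxConsistent JDAxiom CS Γ) t =>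
    ⟨{F : Fm | Fm.just t F ∈ Γ}, fun hbot => ?_, Set.Subset.refl _⟩⟩
  exact hΓ.bot_notMem (hΓ.mem_of_imp_mem (hΓ.mem_of_deriv (.ax (.jd t))) hbot)

end JD

end

theorem stmt_4_general (CS : Set (Nat × Fm))
    (F : Fm) (h : DArbValid CS F) :
    Deriv JDAxiom CS F := by
  by_contra hF
  obtain ⟨Γ, hsub, hΓ⟩ := exists_maxConsistent_superset (consistentSet_singleton_neg hF)
  have hFΓ : F ∈ Γ := h _ (canonicalModel_isDArbModel ⟨Γ, hΓ⟩) Γ hΓ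
  exact hΓ.bot_notMem (hΓ.mem_of_imp_mem (hsub rfl) hFΓ)

/-- Completeness of JD_CS with respect to D-arbitrary CS-subset models, for arbitrary CS. -/
theorem stmt_4 (CS : Set (Nat × Fm)) (hCS : IsConstSpec JDAxiom CS)
    (F : Fm) (h : DArbValid CS F) :
    Deriv JDAxiom CS F :=
  stmt_4_general CS F h
end
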